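/- arXiv:math/0703926 — 2 statements merged into one kernel-verified Lean document; each statement's English description precedes it below -/
import Mathlib

section
/- Let A be a finite generating set of ℤ², let B ⊂ ℝ² be the convex hull of A ∪ (−A), and let ‖·‖_B denote the norm on ℝ² whose unit ball is B. Then the quantity | |v|_A − ‖v‖_B | is bounded uniformly over all v ∈ ℤ²: there exists K ∈ ℝ such that | |v|_A − ‖v‖_B | ≤ K for every v ∈ ℤ². -/
/-!
A word of length `n` in `A ∪ -A` is a sum of `n` points of the convex set `B`, so it lies in
`n • B`; hence `‖v‖_B ≤ |v|_A`. Conversely, if `v ∈ t • B` then `v = ∑ μ_g g` over `g ∈ A ∪ -A`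
with `μ_g ≥ 0` and `∑ μ_g = t`. Rounding the coefficients down splits `v` into a word of length
at most `t` and a remainder of norm at most `∑ ‖g‖`; the remainder ranges over finitely many
lattice points, so its word length is bounded by a constant.
-/

open Pointwise

/-- The word length `|v|_A` of `v ∈ ℤ²` with respect to the finite generating set `A`:
the length of a shortest word in the letters of `A` and their inverses (negatives)
representing `v`. -/
noncomputable def wlenZ2 (A : Finset (ℤ × ℤ)) (v : ℤ × ℤ) : ℕ :=
  sInf {n | ∃ w : List (ℤ × ℤ), (∀ a ∈ w, a ∈ A ∨ -a ∈ A) ∧ w.length = n ∧ w.sum = v}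

/-- The standard embedding of `ℤ²` into `ℝ²`. -/
def toR2 (v : ℤ × ℤ) : ℝ × ℝ := ((v.1 : ℝ), (v.2 : ℝ))

section Convex

variable {E : Type*} [AddCommGroup E] [Module ℝ E] {s : Set E} {x : E} {a b : ℝ}

theorem Convex.mem_smul_of_le (hs : Convex ℝ s) (h0 : (0 : E) ∈ s) (hx : x ∈ a • s)
    (ha : 0 ≤ a) (hab : a ≤ b) : x ∈ b • s := by
  have hsplit := hs.add_smul ha (sub_nonneg.2 hab)
  rw [add_sub_cancel] at hsplit
  rw [hsplit, ← add_zero x]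
  exact Set.add_mem_add hx (by simpa using Set.smul_mem_smul_set (a := b - a) h0)

theorem Convex.list_sum_mem_smul (hs : Convex ℝ s) (h0 : (0 : E) ∈ s) {l : List E}
    (hl : ∀ y ∈ l, y ∈ s) : l.sum ∈ (l.length : ℝ) • s := by
  induction l with
  | nil => simpa using Set.smul_mem_smul_set (a := (0 : ℝ)) h0
  | cons y l ih =>
    rw [List.sum_cons, List.length_cons, Nat.cast_succ, add_comm (l.length : ℝ),
      hs.add_smul zero_le_one (Nat.cast_nonneg _), one_smul]
    exact Set.add_mem_add (hl y List.mem_cons_self)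
      (ih fun z hz => hl z (List.mem_cons_of_mem y hz))

theorem Convex.mem_smul_of_gauge_lt (hs : Convex ℝ s) (h0 : (0 : E) ∈ s) (hx : x ∈ a • s)
    (ha : 0 ≤ a) (h : gauge s x < b) : x ∈ b • s := by
  have hne : {r : ℝ | 0 < r ∧ x ∈ r • s}.Nonempty :=
    ⟨a + 1, by positivity, hs.mem_smul_of_le h0 hx ha (by linarith)⟩
  obtain ⟨r, ⟨hr, hxr⟩, hrb⟩ := exists_lt_of_csInf_lt hne h
  exact hs.mem_smul_of_le h0 hxr hr.le hrb.le

theorem zero_mem_convexHull_of_mem_of_neg_mem (hx : x ∈ s) (hnx : -x ∈ s) :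
    (0 : E) ∈ convexHull ℝ s := by
  have := convex_convexHull ℝ s (subset_convexHull ℝ s hx) (subset_convexHull ℝ s hnx)
    (by norm_num : (0 : ℝ) ≤ 1 / 2) (by norm_num : (0 : ℝ) ≤ 1 / 2) (by norm_num)
  rwa [smul_neg, add_neg_cancel] at this

theorem exists_weights_of_mem_smul_convexHull_image {ι : Type*} {f : ι → E} {t : Finset ι}
    (hf : Set.InjOn f t) (ha : 0 ≤ a) (hx : x ∈ a • convexHull ℝ (f '' t)) :
    ∃ μ : ι → ℝ, (∀ i ∈ t, 0 ≤ μ i) ∧ ∑ i ∈ t, μ i = a ∧ ∑ i ∈ t, μ i • f i = x := by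
  classical
  obtain ⟨y, hy, rfl⟩ := hx
  rw [← Finset.coe_image, Finset.mem_convexHull'] at hy
  obtain ⟨w, hw0, hw1, hwy⟩ := hy
  rw [Finset.sum_image hf] at hw1 hwy
  refine ⟨fun i => a * w (f i), fun i hi => mul_nonneg ha (hw0 _ (Finset.mem_image_of_mem f hi)),
    by rw [← Finset.mul_sum, hw1, mul_one], ?_⟩
  simp_rw [mul_smul, ← Finset.smul_sum, hwy]

end Convex

theorem norm_sum_smul_sub_sum_floor_nsmul_le {ι E : Type*} [SeminormedAddCommGroup E]
    [NormedSpace ℝ E] (t : Finset ι) (μ : ι → ℝ) (hμ : ∀ i ∈ t, 0 ≤ μ i) (f : ι → E) :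
    ‖∑ i ∈ t, μ i • f i - ∑ i ∈ t, ⌊μ i⌋₊ • f i‖ ≤ ∑ i ∈ t, ‖f i‖ := by
  simp_rw [← Nat.cast_smul_eq_nsmul ℝ, ← Finset.sum_sub_distrib, ← sub_smul]
  refine (norm_sum_le _ _).trans (Finset.sum_le_sum fun i hi => ?_)
  rw [norm_smul, Real.norm_of_nonneg (sub_nonneg.2 (Nat.floor_le (hμ i hi)))]
  have := Nat.lt_floor_add_one (μ i)
  exact mul_le_of_le_one_left (norm_nonneg _) (by linarith)

def toR2Hom : ℤ × ℤ →+ ℝ × ℝ := (Int.castAddHom ℝ).prodMap (Int.castAddHom ℝ)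

@[simp]
theorem toR2Hom_apply (v : ℤ × ℤ) : toR2Hom v = toR2 v := rfl

theorem toR2_injective : Function.Injective toR2 := fun _ _ h =>
  Prod.ext (Int.cast_injective (congrArg Prod.fst h)) (Int.cast_injective (congrArg Prod.snd h))

@[simp]
theorem norm_toR2 (v : ℤ × ℤ) : ‖toR2 v‖ = ‖v‖ := by
  simp [toR2, Prod.norm_def, Int.norm_eq_abs]

section WordLength

variable {A : Finset (ℤ × ℤ)}

theorem wlenZ2_le_length {w : List (ℤ × ℤ)} (hw : ∀ a ∈ w, a ∈ A ∨ -a ∈ A) :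
    wlenZ2 A w.sum ≤ w.length :=
  Nat.sInf_le ⟨w, hw, rfl, rfl⟩

theorem wlenZ2_zero : wlenZ2 A 0 = 0 :=
  Nat.le_zero.1 (wlenZ2_le_length (w := []) (by simp))

theorem wlenZ2_le_one {a : ℤ × ℤ} (ha : a ∈ A ∨ -a ∈ A) : wlenZ2 A a ≤ 1 := by
  simpa using wlenZ2_le_length (w := [a]) (by simpa using ha)

theorem exists_word_length_eq_wlenZ2 (hA : AddSubgroup.closure (A : Set (ℤ × ℤ)) = ⊤)
    (v : ℤ × ℤ) :
    ∃ w : List (ℤ × ℤ), (∀ a ∈ w, a ∈ A ∨ -a ∈ A) ∧ w.length = wlenZ2 A v ∧ w.sum = v := by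
  have hv : v ∈ AddSubmonoid.closure ((A : Set (ℤ × ℤ)) ∪ -A) := by
    rw [← AddSubgroup.closure_toAddSubmonoid, hA]
    trivial
  obtain ⟨w, hw, hwv⟩ := AddSubmonoid.exists_list_of_mem_closure hv
  exact Nat.sInf_mem
    (s := {n | ∃ w : List (ℤ × ℤ), (∀ a ∈ w, a ∈ A ∨ -a ∈ A) ∧ w.length = n ∧ w.sum = v})
    ⟨w.length, w, fun a ha => by simpa using hw a ha, rfl, hwv⟩

variable (hA : AddSubgroup.closure (A : Set (ℤ × ℤ)) = ⊤)
include hA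

theorem wlenZ2_add_le (u v : ℤ × ℤ) : wlenZ2 A (u + v) ≤ wlenZ2 A u + wlenZ2 A v := by
  obtain ⟨wu, hwu, hlu, rfl⟩ := exists_word_length_eq_wlenZ2 hA u
  obtain ⟨wv, hwv, hlv, rfl⟩ := exists_word_length_eq_wlenZ2 hA v
  rw [← hlu, ← hlv, ← List.length_append, ← List.sum_append]
  exact wlenZ2_le_length fun a ha => (List.mem_append.1 ha).elim (hwu a) (hwv a)

theorem wlenZ2_nsmul_le (n : ℕ) (v : ℤ × ℤ) : wlenZ2 A (n • v) ≤ n * wlenZ2 A v := by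
  induction n with
  | zero => simp [wlenZ2_zero]
  | succ n ih =>
    rw [succ_nsmul, add_mul, one_mul]
    exact (wlenZ2_add_le hA _ _).trans (Nat.add_le_add_right ih _)

theorem wlenZ2_sum_nsmul_le {t : Finset (ℤ × ℤ)} (ht : ∀ g ∈ t, g ∈ A ∨ -g ∈ A)
    (n : ℤ × ℤ → ℕ) : wlenZ2 A (∑ g ∈ t, n g • g) ≤ ∑ g ∈ t, n g :=
  calc wlenZ2 A (∑ g ∈ t, n g • g) ≤ ∑ g ∈ t, wlenZ2 A (n g • g) :=
        Finset.le_sum_of_subadditive _ wlenZ2_zero.le (wlenZ2_add_le hA) _ _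
    _ ≤ ∑ g ∈ t, n g * wlenZ2 A g := Finset.sum_le_sum fun _ _ => wlenZ2_nsmul_le hA _ _
    _ ≤ ∑ g ∈ t, n g := Finset.sum_le_sum fun g hg =>
        mul_le_of_le_one_right (Nat.zero_le _) (wlenZ2_le_one (ht g hg))

end WordLength

theorem norm_sub_sum_floor_nsmul_le {S : Finset (ℤ × ℤ)} {μ : ℤ × ℤ → ℝ}
    (hμ : ∀ g ∈ S, 0 ≤ μ g) {v : ℤ × ℤ} (hv : ∑ g ∈ S, μ g • toR2 g = toR2 v) :
    ‖v - ∑ g ∈ S, ⌊μ g⌋₊ • g‖ ≤ ∑ g ∈ S, ‖g‖ := by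
  have := norm_sum_smul_sub_sum_floor_nsmul_le S μ hμ toR2
  simp only [hv, norm_toR2] at this
  simpa only [← norm_toR2, ← toR2Hom_apply, map_sub, map_sum, map_nsmul] using this

section Gauge

variable {A : Finset (ℤ × ℤ)}

theorem toR2_mem_convexHull {a : ℤ × ℤ} (ha : a ∈ A ∨ -a ∈ A) :
    toR2 a ∈ convexHull ℝ (toR2 '' ((A : Set (ℤ × ℤ)) ∪ -(A : Set (ℤ × ℤ)))) :=
  subset_convexHull ℝ _ ⟨a, by simpa using ha, rfl⟩

variable (hA : AddSubgroup.closure (A : Set (ℤ × ℤ)) = ⊤)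
include hA

theorem zero_mem_convexHull_toR2 :
    (0 : ℝ × ℝ) ∈ convexHull ℝ (toR2 '' ((A : Set (ℤ × ℤ)) ∪ -(A : Set (ℤ × ℤ)))) := by
  obtain ⟨a, ha⟩ : A.Nonempty := Finset.nonempty_iff_ne_empty.2 (by rintro rfl; simp at hA)
  refine zero_mem_convexHull_of_mem_of_neg_mem (x := toR2 a) ⟨a, Or.inl ha, rfl⟩
    ⟨-a, Or.inr (by simpa using ha), ?_⟩
  simp [← toR2Hom_apply]

theorem toR2_mem_wlenZ2_smul_convexHull (v : ℤ × ℤ) :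
    toR2 v ∈
      (wlenZ2 A v : ℝ) • convexHull ℝ (toR2 '' ((A : Set (ℤ × ℤ)) ∪ -(A : Set (ℤ × ℤ)))) := by
  obtain ⟨w, hw, hlen, rfl⟩ := exists_word_length_eq_wlenZ2 hA v
  rw [← hlen, ← toR2Hom_apply, map_list_sum, ← List.length_map toR2Hom]
  refine (convex_convexHull ℝ _).list_sum_mem_smul (zero_mem_convexHull_toR2 hA) ?_
  intro y hy
  obtain ⟨a, ha, rfl⟩ := List.mem_map.1 hy
  exact toR2_mem_convexHull (hw a ha)

theorem exists_wlenZ2_le_add_of_mem_smul_convexHull : ∃ C : ℕ, ∀ (v : ℤ × ℤ) (t : ℝ), 0 ≤ t →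
    toR2 v ∈ t • convexHull ℝ (toR2 '' ((A : Set (ℤ × ℤ)) ∪ -(A : Set (ℤ × ℤ)))) →
    (wlenZ2 A v : ℝ) ≤ t + C := by
  classical
  set S : Finset (ℤ × ℤ) := A ∪ -A
  have hS : ∀ g ∈ S, g ∈ A ∨ -g ∈ A := by simp [S]
  have hSA : (A : Set (ℤ × ℤ)) ∪ -(A : Set (ℤ × ℤ)) = S := by simp [S]
  obtain ⟨C, hC⟩ := ((isCompact_closedBall (0 : ℤ × ℤ) (∑ g ∈ S, ‖g‖)).finite_of_discrete.image
    (wlenZ2 A)).bddAbove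
  refine ⟨C, fun v t ht hv => ?_⟩
  rw [hSA] at hv
  obtain ⟨μ, hμ0, hμt, hμv⟩ :=
    exists_weights_of_mem_smul_convexHull_image toR2_injective.injOn ht hv
  set u := ∑ g ∈ S, ⌊μ g⌋₊ • g
  have hu : (wlenZ2 A u : ℝ) ≤ t := calc
    (wlenZ2 A u : ℝ) ≤ ∑ g ∈ S, (⌊μ g⌋₊ : ℝ) := by
      exact_mod_cast wlenZ2_sum_nsmul_le hA hS _
    _ ≤ t := hμt ▸ Finset.sum_le_sum fun g hg => Nat.floor_le (hμ0 g hg)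
  have hvu : wlenZ2 A (v - u) ≤ C :=
    hC ⟨v - u, mem_closedBall_zero_iff.2 (norm_sub_sum_floor_nsmul_le hμ0 hμv), rfl⟩
  calc (wlenZ2 A v : ℝ) ≤ wlenZ2 A u + wlenZ2 A (v - u) := by
        exact_mod_cast add_sub_cancel u v ▸ wlenZ2_add_le hA u (v - u)
    _ ≤ t + C := add_le_add hu (Nat.cast_le.2 hvu)

end Gauge

/-- Let `A` be a finite generating set of `ℤ²`, `B ⊂ ℝ²` the convex hull of
`A ∪ (-A)`, and `‖·‖_B = gauge B` the norm on `ℝ²` whose unit ball is `B`. Then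
`| |v|_A − ‖v‖_B |` is bounded uniformly over `v ∈ ℤ²`. -/
theorem wordLength_close_to_gauge_norm
    (A : Finset (ℤ × ℤ)) (hA : AddSubgroup.closure (A : Set (ℤ × ℤ)) = ⊤)
    (B : Set (ℝ × ℝ))
    (hB : B = convexHull ℝ (toR2 '' ((A : Set (ℤ × ℤ)) ∪ (-(A : Set (ℤ × ℤ)))))) :
    ∃ K : ℝ, ∀ v : ℤ × ℤ, |(wlenZ2 A v : ℝ) - gauge B (toR2 v)| ≤ K := by
  subst hB
  obtain ⟨C, hC⟩ := exists_wlenZ2_le_add_of_mem_smul_convexHull hA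
  refine ⟨C + 1, fun v => ?_⟩
  have hv := toR2_mem_wlenZ2_smul_convexHull hA v
  have hlower := gauge_le_of_mem (Nat.cast_nonneg _) hv
  have hupper := hC v _ (add_nonneg (gauge_nonneg _) zero_le_one)
    ((convex_convexHull ℝ _).mem_smul_of_gauge_lt (zero_mem_convexHull_toR2 hA) hv
      (Nat.cast_nonneg _) (lt_add_one _))
  rw [abs_le]
  constructor <;> linarith [(C.cast_nonneg : (0 : ℝ) ≤ C)]
end

section
/- Let A be a finite generating set of the discrete Heisenberg group H. Then there are constants C, D, E ∈ ℝ with D > 0 such that the following holds. Let n ∈ ℤ, let a₁a₂⋯a_m be a word of minimal length in the letters of A ∪ A⁻¹ representing z^n, let f : ℝ² → ℝ be a linear functional of norm 1, and let P_n = {e, a₁, a₁a₂, …, a₁a₂⋯a_m} ⊂ H be the set of elements represented by the prefixes of this word. Then the diameter of the set f(φ(P_n)) ⊂ ℝ is at most C√|n| and at least D√|n| − E. -/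
/-- The discrete Heisenberg group `H = ⟨x,y | [x,[x,y]], [y,[x,y]]⟩`, realized as triples
`⟨a, b, c⟩` of integers (the unitriangular 3×3 integer matrix with superdiagonal `a, b` and
corner `c`), so that `x = ⟨1,0,0⟩`, `y = ⟨0,1,0⟩` and `x^i * y^j * z^k = ⟨i, j, i*j + k⟩`. -/
@[ext] structure Heis where
  a : ℤ
  b : ℤ
  c : ℤ

namespace Heis

instance : Mul Heis := ⟨fun g h => ⟨g.a + h.a, g.b + h.b, g.c + h.c + g.a * h.b⟩⟩
instance : One Heis := ⟨⟨0, 0, 0⟩⟩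
instance : Inv Heis := ⟨fun g => ⟨-g.a, -g.b, g.a * g.b - g.c⟩⟩

@[simp] lemma mul_a (g h : Heis) : (g * h).a = g.a + h.a := rfl
@[simp] lemma mul_b (g h : Heis) : (g * h).b = g.b + h.b := rfl
@[simp] lemma mul_c (g h : Heis) : (g * h).c = g.c + h.c + g.a * h.b := rfl
@[simp] lemma one_a : (1 : Heis).a = 0 := rfl
@[simp] lemma one_b : (1 : Heis).b = 0 := rfl
@[simp] lemma one_c : (1 : Heis).c = 0 := rfl
@[simp] lemma inv_a (g : Heis) : g⁻¹.a = -g.a := rfl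
@[simp] lemma inv_b (g : Heis) : g⁻¹.b = -g.b := rfl
@[simp] lemma inv_c (g : Heis) : g⁻¹.c = g.a * g.b - g.c := rfl

instance : Group Heis where
  mul_assoc g h k := by ext <;> simp <;> ring
  one_mul g := by ext <;> simp
  mul_one g := by ext <;> simp
  inv_mul_cancel g := by ext <;> simp

/-- The standard generator `x` of the Heisenberg group. -/
def x : Heis := ⟨1, 0, 0⟩
/-- The standard generator `y` of the Heisenberg group. -/
def y : Heis := ⟨0, 1, 0⟩
/-- The central element `z = [x,y] = x⁻¹y⁻¹xy`, generating the center; every element of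
`Heis` is uniquely of the form `x^i * y^j * z^k`. -/
def z : Heis := ⟨0, 0, 1⟩

/-- The abelianization map `φ : Heis → Heis_ab ≅ ℤ²`, sending `x^i y^j z^k` to `(i,j)`. -/
def φ (g : Heis) : ℤ × ℤ := (g.a, g.b)

/-- The exponent of `z` in the normal form of `g`:  the unique `k` with
`g = x^i * y^j * z^k` (where `(i,j) = φ g`). -/
def zexp (g : Heis) : ℤ := g.c - g.a * g.b

end Heis

/-- `A` is a generating set of the group `G`. -/
def IsGenSet {G : Type*} [Group G] (A : Finset G) : Prop :=
  Subgroup.closure (A : Set G) = ⊤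

/-- A word in the letters of `A ∪ A⁻¹`. -/
def IsWordOn {G : Type*} [Group G] (A : Finset G) (w : List G) : Prop :=
  ∀ a ∈ w, a ∈ A ∨ a⁻¹ ∈ A

/-- The word length `|g|_A` of `g` with respect to the finite generating set `A`:
the length of a shortest word in the letters of `A` and their inverses representing `g`. -/
noncomputable def wlen {G : Type*} [Group G] (A : Finset G) (g : G) : ℕ :=
  sInf {n | ∃ w : List G, IsWordOn A w ∧ w.length = n ∧ w.prod = g}

/-- The standard embedding of `ℤ² ≅ Heis_ab` into the Euclidean plane. -/
noncomputable def toE2 (v : ℤ × ℤ) : EuclideanSpace ℝ (Fin 2) :=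
  (WithLp.equiv 2 (Fin 2 → ℝ)).symm ![(v.1 : ℝ), (v.2 : ℝ)]

/-!
Upper bound: with `s = ⌊√N⌋` we have `z ^ N = ⁅x ^ s, y ^ s⁆ * z ^ r` for some `r ≤ 2 s`, so a
geodesic word for `z ^ n` has length `m = O(√|n|)`, and each letter moves `f ∘ φ` by a bounded
amount.

Lower bound: the `z`-exponent of a word representing a central element is the signed area
enclosed by its path in the abelianization. Measure that area in the orthonormal frame
`(f, f⊥)`: each letter contributes its own bounded area plus a strip of bounded width in the
`f⊥` direction and height at most `2 · diam f(φ(P_n))`. Hence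
`2 |n| ≤ m K (1 + 2 diam)`, and `m = O(√|n|)` forces `diam ≥ D √|n| - E`.
-/

section WordLength

open scoped commutatorElement

variable {G : Type*} [Group G] {A : Finset G}

lemma IsWordOn.append {v w : List G} (hv : IsWordOn A v) (hw : IsWordOn A w) :
    IsWordOn A (v ++ w) := by
  intro a ha
  rcases List.mem_append.1 ha with h | h
  exacts [hv a h, hw a h]

lemma IsWordOn.reverse_map_inv {w : List G} (hw : IsWordOn A w) :
    IsWordOn A (w.map (·⁻¹)).reverse := by
  intro a ha
  obtain ⟨b, hb, rfl⟩ := List.mem_map.1 (List.mem_reverse.1 ha)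
  simpa [or_comm] using hw b hb

lemma IsGenSet.exists_isWordOn_prod_eq (hA : IsGenSet A) (g : G) :
    ∃ w : List G, IsWordOn A w ∧ w.prod = g := by
  have hg : g ∈ Subgroup.closure (A : Set G) := hA ▸ Subgroup.mem_top g
  induction hg using Subgroup.closure_induction with
  | mem a ha => exact ⟨[a], by simpa [IsWordOn] using Or.inl ha, List.prod_singleton⟩
  | one => exact ⟨[], by simp [IsWordOn], List.prod_nil⟩
  | mul a b _ _ iha ihb =>
    obtain ⟨v, hv, rfl⟩ := iha
    obtain ⟨w, hw, rfl⟩ := ihb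
    exact ⟨v ++ w, hv.append hw, List.prod_append⟩
  | inv a _ iha =>
    obtain ⟨w, hw, rfl⟩ := iha
    exact ⟨(w.map (·⁻¹)).reverse, hw.reverse_map_inv, (List.prod_inv_reverse w).symm⟩

lemma wlen_prod_le_length {w : List G} (hw : IsWordOn A w) : wlen A w.prod ≤ w.length :=
  Nat.sInf_le ⟨w, hw, rfl, rfl⟩

lemma IsGenSet.exists_isWordOn_length_eq_wlen (hA : IsGenSet A) (g : G) :
    ∃ w : List G, IsWordOn A w ∧ w.length = wlen A g ∧ w.prod = g := by
  obtain ⟨w, hw, hwg⟩ := hA.exists_isWordOn_prod_eq g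
  exact Nat.sInf_mem (s := {n | ∃ w : List G, IsWordOn A w ∧ w.length = n ∧ w.prod = g})
    ⟨w.length, w, hw, rfl, hwg⟩

lemma wlen_one : wlen A (1 : G) = 0 :=
  Nat.le_zero.1 <| wlen_prod_le_length (w := []) (by simp [IsWordOn])

lemma wlen_mul_le (hA : IsGenSet A) (g h : G) : wlen A (g * h) ≤ wlen A g + wlen A h := by
  obtain ⟨v, hv, hvl, rfl⟩ := hA.exists_isWordOn_length_eq_wlen g
  obtain ⟨w, hw, hwl, rfl⟩ := hA.exists_isWordOn_length_eq_wlen h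
  simpa [← hvl, ← hwl] using wlen_prod_le_length (hv.append hw)

lemma wlen_inv (hA : IsGenSet A) (g : G) : wlen A g⁻¹ = wlen A g := by
  have key : ∀ g : G, wlen A g⁻¹ ≤ wlen A g := fun g => by
    obtain ⟨w, hw, hwl, rfl⟩ := hA.exists_isWordOn_length_eq_wlen g
    simpa [← hwl, List.prod_inv_reverse] using wlen_prod_le_length hw.reverse_map_inv
  exact (key g).antisymm (by simpa using key g⁻¹)

lemma wlen_pow_le (hA : IsGenSet A) (g : G) (k : ℕ) : wlen A (g ^ k) ≤ k * wlen A g := by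
  induction k with
  | zero => simp [wlen_one]
  | succ k ih =>
    rw [pow_succ, add_mul, one_mul]
    exact (wlen_mul_le hA _ _).trans (by omega)

lemma wlen_commutatorElement_le (hA : IsGenSet A) (g h : G) :
    wlen A ⁅g, h⁆ ≤ 2 * (wlen A g + wlen A h) := by
  rw [commutatorElement_def]
  have := wlen_mul_le hA (g * h * g⁻¹) h⁻¹
  have := wlen_mul_le hA (g * h) g⁻¹
  have := wlen_mul_le hA g h
  rw [wlen_inv hA] at *
  omega

end WordLength

namespace Heis

open scoped commutatorElement

lemma x_pow (k : ℕ) : x ^ k = ⟨k, 0, 0⟩ := by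
  induction k with
  | zero => rfl
  | succ k ih => rw [pow_succ, ih]; ext <;> simp [x]

lemma y_pow (k : ℕ) : y ^ k = ⟨0, k, 0⟩ := by
  induction k with
  | zero => rfl
  | succ k ih => rw [pow_succ, ih]; ext <;> simp [y]

lemma z_zpow (n : ℤ) : z ^ n = ⟨0, 0, n⟩ := by
  induction n using Int.induction_on with
  | zero => rfl
  | succ k ih => rw [zpow_add_one, ih]; ext <;> simp [z]
  | pred k ih => rw [zpow_sub_one, ih]; ext <;> simp [z, sub_eq_add_neg]

lemma commutatorElement_x_pow_y_pow (s : ℕ) : ⁅x ^ s, y ^ s⁆ = z ^ (s * s) := by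
  rw [commutatorElement_def, x_pow, y_pow, ← zpow_natCast, z_zpow]
  ext <;> simp

lemma wlen_z_pow_le {A : Finset Heis} (hA : IsGenSet A) (N : ℕ) :
    wlen A (z ^ N) ≤ 2 * N.sqrt * (wlen A x + wlen A y + wlen A z) := by
  have hle := Nat.sqrt_le N
  have hlt : N < N.sqrt * N.sqrt + 2 * N.sqrt + 1 := by
    have := Nat.lt_succ_sqrt N
    rwa [Nat.succ_eq_add_one, add_mul_self_eq, mul_one, one_mul, add_assoc] at this
  set s := N.sqrt
  obtain ⟨r, hr, hN⟩ : ∃ r ≤ 2 * s, N = s * s + r := ⟨N - s * s, by omega, by omega⟩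
  rw [hN, pow_add, ← commutatorElement_x_pow_y_pow]
  have := wlen_mul_le hA ⁅x ^ s, y ^ s⁆ (z ^ r)
  have := wlen_commutatorElement_le hA (x ^ s) (y ^ s)
  have := wlen_pow_le hA x s
  have := wlen_pow_le hA y s
  have := wlen_pow_le hA z r
  have := Nat.mul_le_mul_right (wlen A z) hr
  nlinarith

lemma wlen_z_zpow_le {A : Finset Heis} (hA : IsGenSet A) (n : ℤ) :
    (wlen A (z ^ n) : ℝ) ≤ 2 * (wlen A x + wlen A y + wlen A z) * √|(n : ℝ)| := by
  have hwlen : wlen A (z ^ n) = wlen A (z ^ n.natAbs) := by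
    obtain ⟨k, rfl | rfl⟩ := Int.eq_nat_or_neg n <;> simp [wlen_inv hA]
  have hsqrt : (n.natAbs.sqrt : ℝ) ≤ √|(n : ℝ)| :=
    Real.le_sqrt_of_sq_le <| by
      rw [← Int.cast_abs, ← Int.natCast_natAbs]; exact_mod_cast Nat.sqrt_le' _
  calc (wlen A (z ^ n) : ℝ) ≤ 2 * n.natAbs.sqrt * (wlen A x + wlen A y + wlen A z) := by
        rw [hwlen]; exact_mod_cast wlen_z_pow_le hA _
    _ ≤ _ := by rw [mul_right_comm]; gcongr

end Heis

lemma Metric.diam_image_Iic_le {X : Type*} [PseudoMetricSpace X] {f : ℕ → X} {m : ℕ} {d : ℝ}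
    (hd₀ : 0 ≤ d) (hd : ∀ t < m, dist (f t) (f (t + 1)) ≤ d) :
    Metric.diam (f '' Set.Iic m) ≤ m * d := by
  refine Metric.diam_le_of_forall_dist_le (by positivity) ?_
  rintro _ ⟨s, hs, rfl⟩ _ ⟨t, ht, rfl⟩
  wlog hst : s ≤ t generalizing s t
  · rw [dist_comm]; exact this t ht s hs (by omega)
  calc dist (f s) (f t) ≤ ∑ _k ∈ Finset.Ico s t, d :=
        dist_le_Ico_sum_of_dist_le hst fun _ hk => hd _ (by simp only [Set.mem_Iic] at ht; omega)
    _ ≤ m * d := by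
        rw [Finset.sum_const, Nat.card_Ico, nsmul_eq_mul]
        gcongr
        simp only [Set.mem_Iic] at ht
        exact_mod_cast (Nat.sub_le t s).trans ht

lemma exists_sq_add_sq_eq_one_apply_toE2 (f : EuclideanSpace ℝ (Fin 2) →L[ℝ] ℝ) (hf : ‖f‖ = 1) :
    ∃ α β : ℝ, α ^ 2 + β ^ 2 = 1 ∧ ∀ v : ℤ × ℤ, f (toE2 v) = α * v.1 + β * v.2 := by
  obtain ⟨c, rfl⟩ := (InnerProductSpace.toDual ℝ (EuclideanSpace ℝ (Fin 2))).surjective f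
  rw [LinearIsometryEquiv.norm_map, EuclideanSpace.norm_eq, Real.sqrt_eq_one,
    Fin.sum_univ_two] at hf
  refine ⟨c 0, c 1, by simpa using hf, fun v => ?_⟩
  rw [InnerProductSpace.toDual_apply_apply, toE2, PiLp.inner_apply, Fin.sum_univ_two]
  simp [mul_comm]

lemma abs_le_one_of_sq_add_sq_eq_one {α β : ℝ} (h : α ^ 2 + β ^ 2 = 1) : |α| ≤ 1 ∧ |β| ≤ 1 :=
  ⟨(sq_le_one_iff_abs_le_one α).1 (by nlinarith [sq_nonneg β]),
    (sq_le_one_iff_abs_le_one β).1 (by nlinarith [sq_nonneg α])⟩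

lemma abs_mul_add_mul_le {α β x y : ℝ} (hα : |α| ≤ 1) (hβ : |β| ≤ 1) :
    |α * x + β * y| ≤ |x| + |y| :=
  calc |α * x + β * y| ≤ |α| * |x| + |β| * |y| := by
        simpa only [abs_mul] using abs_add_le (α * x) (β * y)
    _ ≤ 1 * |x| + 1 * |y| := by gcongr
    _ = |x| + |y| := by ring

namespace Heis

/-- Twice the central coordinate of `g` in exponential coordinates,
`g = exp (a X + b Y + (c - a b / 2) Z)`. -/
def area (g : Heis) : ℤ := 2 * g.c - g.a * g.b

lemma area_mul (g h : Heis) : area (g * h) = area g + area h + (g.a * h.b - g.b * h.a) := by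
  simp only [area, mul_a, mul_b, mul_c]; ring

lemma area_inv (g : Heis) : area g⁻¹ = -area g := by
  simp only [area, inv_a, inv_b, inv_c]; ring

lemma area_z_zpow (n : ℤ) : area (z ^ n) = 2 * n := by
  simp [area, z_zpow]

lemma exists_letter_bound (A : Finset Heis) :
    ∃ K : ℝ, 0 ≤ K ∧ ∀ g, (g ∈ A ∨ g⁻¹ ∈ A) →
      |(g.a : ℝ)| + |(g.b : ℝ)| ≤ K ∧ |(area g : ℝ)| ≤ K := by
  have hsize : ∀ g, (g ∈ A ∨ g⁻¹ ∈ A) →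
      |g.a| + |g.b| + |area g| ≤ ∑ h ∈ A, (|h.a| + |h.b| + |area h|) := by
    rintro g (hg | hg)
    · exact Finset.single_le_sum (f := fun h => |h.a| + |h.b| + |area h|)
        (fun h _ => by positivity) hg
    · simpa [area_inv] using Finset.single_le_sum (f := fun h => |h.a| + |h.b| + |area h|)
        (fun h _ => by positivity) hg
  refine ⟨∑ h ∈ A, (|h.a| + |h.b| + |area h|), by positivity, fun g hg => ?_⟩
  have := hsize g hg
  have := abs_nonneg g.a
  have := abs_nonneg g.b
  have := abs_nonneg (area g)
  constructor <;> push_cast [← Int.cast_abs] <;> exact_mod_cast (by omega)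

section Frame

variable (α β : ℝ)

def proj (g : Heis) : ℝ := α * g.a + β * g.b

def projPerp (g : Heis) : ℝ := -β * g.a + α * g.b

/-- Twice the corner coordinate of `g` after rotating the frame of `ℤ²` to `(proj, projPerp)`:
the symmetric coordinate `area = 2c - ab` is rotation invariant. -/
def framedArea (g : Heis) : ℝ := area g + proj α β g * projPerp α β g

variable {α β}

lemma proj_one : proj α β 1 = 0 := by
  simp [proj]

lemma proj_mul (g h : Heis) : proj α β (g * h) = proj α β g + proj α β h := by
  simp only [proj, mul_a, mul_b]; push_cast; ring

lemma abs_proj_le (hα : |α| ≤ 1) (hβ : |β| ≤ 1) (g : Heis) :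
    |proj α β g| ≤ |(g.a : ℝ)| + |(g.b : ℝ)| :=
  abs_mul_add_mul_le hα hβ

lemma abs_projPerp_le (hα : |α| ≤ 1) (hβ : |β| ≤ 1) (g : Heis) :
    |projPerp α β g| ≤ |(g.a : ℝ)| + |(g.b : ℝ)| :=
  abs_mul_add_mul_le (by rwa [abs_neg]) hα

lemma framedArea_mul (hαβ : α ^ 2 + β ^ 2 = 1) (g h : Heis) :
    framedArea α β (g * h) =
      framedArea α β g + area h + (proj α β g + proj α β (g * h)) * projPerp α β h := by
  simp only [framedArea, proj, projPerp, area_mul, mul_a, mul_b]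
  push_cast
  linear_combination ((g.b : ℝ) * h.a - (g.a : ℝ) * h.b) * hαβ

lemma framedArea_z_zpow (n : ℤ) : framedArea α β (z ^ n) = 2 * n := by
  rw [framedArea, area_z_zpow]
  simp [proj, z_zpow]

lemma proj_prod_take_succ {w : List Heis} {t : ℕ} (ht : t < w.length) :
    proj α β (w.take (t + 1)).prod = proj α β (w.take t).prod + proj α β w[t] := by
  rw [List.prod_take_succ _ _ ht, proj_mul]

/-- Each letter `g` changes `framedArea` by its own area plus a strip of width `projPerp g` and
height at most `2 R`. -/
lemma abs_framedArea_prod_le (hαβ : α ^ 2 + β ^ 2 = 1) {w : List Heis} {K R : ℝ}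
    (hK : ∀ g ∈ w, |(g.a : ℝ)| + |(g.b : ℝ)| ≤ K ∧ |(area g : ℝ)| ≤ K)
    (hR : ∀ t ≤ w.length, |proj α β (w.take t).prod| ≤ R) :
    |framedArea α β w.prod| ≤ w.length * (K * (1 + 2 * R)) := by
  obtain ⟨hα, hβ⟩ := abs_le_one_of_sq_add_sq_eq_one hαβ
  have hstep : ∀ t < w.length, dist (framedArea α β (w.take t).prod)
      (framedArea α β (w.take (t + 1)).prod) ≤ K * (1 + 2 * R) := by
    intro t ht
    have hu := hR t ht.le
    have hu' := hR (t + 1) ht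
    obtain ⟨hab, harea⟩ := hK _ (List.getElem_mem ht)
    have hv := (abs_projPerp_le hα hβ w[t]).trans hab
    have hR₀ : 0 ≤ R := (abs_nonneg _).trans hu
    rw [List.prod_take_succ _ _ ht] at hu' ⊢
    rw [dist_comm, Real.dist_eq, framedArea_mul hαβ, add_assoc, add_sub_cancel_left]
    calc |(area w[t] : ℝ) + (proj α β (w.take t).prod + proj α β ((w.take t).prod * w[t]))
          * projPerp α β w[t]|
        ≤ |(area w[t] : ℝ)| + (|proj α β (w.take t).prod|
          + |proj α β ((w.take t).prod * w[t])|) * |projPerp α β w[t]| := by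
          refine (abs_add_le _ _).trans ?_
          rw [abs_mul]
          gcongr
          exact abs_add_le _ _
      _ ≤ K + (R + R) * K := by gcongr
      _ = K * (1 + 2 * R) := by ring
  simpa [framedArea, proj, area] using
    dist_le_range_sum_of_dist_le (f := fun t => framedArea α β (w.take t).prod) w.length
      fun ht => hstep _ ht

end Frame

end Heis

/-- Lemma `notstraight`. For every finite generating set `A` of the
discrete Heisenberg group there are `C, D, E ∈ ℝ` with `D > 0` such that for every `n ∈ ℤ`,
every minimal-length word `a₁⋯a_m` in the letters of `A ∪ A⁻¹` representing `z^n`, and every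
linear functional `f : ℝ² → ℝ` of norm `1`, the diameter of `f(φ(P_n))`, where
`P_n = {e, a₁, a₁a₂, …, a₁⋯a_m}` is the set of prefix products, is at most `C√|n|` and at
least `D√|n| − E`. -/
theorem heisenberg_notstraight
    (A : Finset Heis) (hA : IsGenSet A) :
    ∃ C D E : ℝ, 0 < D ∧
      ∀ (n : ℤ) (w : List Heis),
        IsWordOn A w → w.prod = Heis.z ^ n → w.length = wlen A (Heis.z ^ n) →
        ∀ f : EuclideanSpace ℝ (Fin 2) →L[ℝ] ℝ, ‖f‖ = 1 →
          Metric.diam ((fun t : ℕ => f (toE2 (Heis.φ (w.take t).prod))) ''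
              {t : ℕ | t ≤ w.length}) ≤ C * Real.sqrt |(n : ℝ)| ∧
          D * Real.sqrt |(n : ℝ)| - E ≤
            Metric.diam ((fun t : ℕ => f (toE2 (Heis.φ (w.take t).prod))) ''
              {t : ℕ | t ≤ w.length}) := by
  obtain ⟨K, hK₀, hK⟩ := Heis.exists_letter_bound A
  set L : ℝ := 2 * (wlen A Heis.x + wlen A Heis.y + wlen A Heis.z)
  refine ⟨K * L, 1 / (K * L + 1), 1 / 2, by positivity, ?_⟩
  intro n w hw hprod hlen f hf
  obtain ⟨α, β, hαβ, hf⟩ := exists_sq_add_sq_eq_one_apply_toE2 f hf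
  have hKw : ∀ g ∈ w, |(g.a : ℝ)| + |(g.b : ℝ)| ≤ K ∧ |(Heis.area g : ℝ)| ≤ K :=
    fun g hg => hK g (hw g hg)
  have hm : (w.length : ℝ) ≤ L * √|(n : ℝ)| := hlen ▸ Heis.wlen_z_zpow_le hA n
  have hS : (fun t : ℕ => f (toE2 (Heis.φ (w.take t).prod))) '' {t : ℕ | t ≤ w.length} =
      (fun t => Heis.proj α β (w.take t).prod) '' Set.Iic w.length := by
    simp only [hf]; rfl
  rw [hS]
  set R := Metric.diam ((fun t => Heis.proj α β (w.take t).prod) '' Set.Iic w.length)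
  constructor
  · obtain ⟨hα, hβ⟩ := abs_le_one_of_sq_add_sq_eq_one hαβ
    calc R ≤ w.length * K := Metric.diam_image_Iic_le hK₀ fun t ht => by
          rw [Heis.proj_prod_take_succ ht, Real.dist_eq, sub_add_cancel_left, abs_neg]
          exact (Heis.abs_proj_le hα hβ _).trans (hKw _ (List.getElem_mem ht)).1
      _ ≤ K * L * √|(n : ℝ)| := by nlinarith
  · have hR : ∀ t ≤ w.length, |Heis.proj α β (w.take t).prod| ≤ R := fun t ht => by
      simpa only [List.take_zero, List.prod_nil, Heis.proj_one, Real.dist_eq, sub_zero] using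
        Metric.dist_le_diam_of_mem
        ((Set.finite_Iic w.length).image fun t => Heis.proj α β (w.take t).prod).isBounded
        (Set.mem_image_of_mem _ (Set.mem_Iic.2 ht)) (Set.mem_image_of_mem _ (Nat.zero_le _))
    have harea := Heis.abs_framedArea_prod_le hαβ hKw hR
    rw [hprod, Heis.framedArea_z_zpow] at harea
    have hR₀ : 0 ≤ R := Metric.diam_nonneg
    have hn : |2 * (n : ℝ)| = 2 * √|(n : ℝ)| * √|(n : ℝ)| := by
      rw [mul_assoc, Real.mul_self_sqrt (abs_nonneg _), abs_mul, abs_two]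
    have hsqrt : 2 * √|(n : ℝ)| ≤ K * L * (1 + 2 * R) := by
      rcases (Real.sqrt_nonneg |(n : ℝ)|).eq_or_lt with h | h
      · rw [← h, mul_zero]; positivity
      refine le_of_mul_le_mul_right ?_ h
      calc 2 * √|(n : ℝ)| * √|(n : ℝ)| ≤ w.length * (K * (1 + 2 * R)) := hn ▸ harea
        _ ≤ L * √|(n : ℝ)| * (K * (1 + 2 * R)) := by gcongr
        _ = K * L * (1 + 2 * R) * √|(n : ℝ)| := by ring
    rw [div_mul_eq_mul_div, one_mul, sub_le_iff_le_add, div_le_iff₀ (by positivity)]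
    nlinarith
end
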